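/- Let G₂ = ℤ/2 and G₄ = ℤ/2 with μ : G₂ × G₂ → G₄ the nonzero symmetric bilinear map (μ(1,1) = 1). Let A be the ring presented by generators ℓ (for L_x, x the generator of G₂) and v (for V_y, y the generator of G₄) over ℤ with relations ℓ² = 1, 2ℓ = v, 2v = 4. Then A ≅ ℤ[u]/(u² + 2u, 4u) via u = ℓ − 1, and the ideal of rank-zero elements of A is cyclic of order 4. -/

import Mathlib

/-! In `ℤ[u]/(u² + 2u, 4u)` the relation `u² = -2u` reduces every element to `n + c u`, and `n`
is the rank (evaluation at `u = 0`), so the rank-zero elements are the multiples of `u`. Since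
`4u = 0` while the ring map to `ℤ/8` with `u ↦ 2` sends `u` to an element of additive order 4,
`u` has order exactly 4. The substitution `ℓ = u + 1`, `v = 2u + 2` matches the presentations:
`ℓ² = 1` becomes `u² + 2u = 0` and `2v = 4` becomes `4u = 0`. -/

open Polynomial

theorem Ideal.apply_eq_zero_of_mem_span {R S F : Type*} [CommRing R] [Semiring S]
    [FunLike F R S] [RingHomClass F R S] (f : F) {s : Set R} (h : ∀ x ∈ s, f x = 0) :
    ∀ a ∈ Ideal.span s, f a = 0 :=
  fun _ ha => RingHom.mem_ker.mp (Ideal.span_le.mpr (fun x hx => RingHom.mem_ker.mpr (h x hx)) ha)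

theorem Ideal.Quotient.mk_eq_aeval {R : Type*} [CommRing R] (I : Ideal R[X]) (p : R[X]) :
    Ideal.Quotient.mk I p = aeval (Ideal.Quotient.mk I X) p := by
  rw [← Ideal.Quotient.mkₐ_eq_mk R, aeval_algHom_apply, aeval_X_left_apply]

section

variable {R : Type*} [CommRing R] {u : R} {a : ℤ}

theorem pow_succ_eq_of_sq_eq (h : u ^ 2 = a * u) (n : ℕ) : u ^ (n + 1) = (a : R) ^ n * u := by
  induction n with
  | zero => simp
  | succ n ih => rw [pow_succ, ih, pow_succ]; linear_combination (a : R) ^ n * h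

theorem exists_aeval_eq_of_sq_eq (h : u ^ 2 = a * u) (p : ℤ[X]) :
    ∃ c : ℤ, aeval u p = ((p.eval 0 : ℤ) : R) + c * u := by
  induction p using Polynomial.induction_on' with
  | add p q hp hq =>
    obtain ⟨c, hc⟩ := hp
    obtain ⟨d, hd⟩ := hq
    exact ⟨c + d, by rw [map_add, hc, hd, eval_add]; push_cast; ring⟩
  | monomial n b =>
    cases n with
    | zero => exact ⟨0, by simp⟩
    | succ n =>
      refine ⟨b * a ^ n, ?_⟩
      rw [aeval_monomial, pow_succ_eq_of_sq_eq h, eval_monomial, zero_pow n.succ_ne_zero,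
        algebraMap_int_eq, eq_intCast]
      push_cast
      ring

end

noncomputable section

namespace KRP4

abbrev uIdeal : Ideal ℤ[X] := Ideal.span {X ^ 2 + 2 * X, 4 * X}

abbrev lvIdeal : Ideal (MvPolynomial (Fin 2) ℤ) :=
  Ideal.span {MvPolynomial.X 0 ^ 2 - 1, 2 * MvPolynomial.X 0 - MvPolynomial.X 1,
    2 * MvPolynomial.X 1 - 4}

abbrev QB := ℤ[X] ⧸ uIdeal
abbrev QA := MvPolynomial (Fin 2) ℤ ⧸ lvIdeal

abbrev u : QB := Ideal.Quotient.mk _ X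
abbrev ℓ : QA := Ideal.Quotient.mk _ (MvPolynomial.X 0)
abbrev v : QA := Ideal.Quotient.mk _ (MvPolynomial.X 1)

theorem u_sq : u ^ 2 = -2 * u := by
  have : u ^ 2 + 2 * u = 0 := Ideal.Quotient.eq_zero_iff_mem.2 (Ideal.subset_span (by simp))
  linear_combination this

theorem four_mul_u : 4 * u = 0 := Ideal.Quotient.eq_zero_iff_mem.2 (Ideal.subset_span (by simp))

theorem ℓ_sq : ℓ ^ 2 = 1 := by
  have : ℓ ^ 2 - 1 = 0 := Ideal.Quotient.eq_zero_iff_mem.2 (Ideal.subset_span (by simp))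
  linear_combination this

theorem two_mul_ℓ : 2 * ℓ = v := by
  have : 2 * ℓ - v = 0 := Ideal.Quotient.eq_zero_iff_mem.2 (Ideal.subset_span (by simp))
  linear_combination this

theorem two_mul_v : 2 * v = 4 := by
  have : 2 * v - 4 = 0 := Ideal.Quotient.eq_zero_iff_mem.2 (Ideal.subset_span (by simp))
  linear_combination this

def rank : QB →ₐ[ℤ] ℤ :=
  Ideal.Quotient.liftₐ uIdeal (aeval 0)
    (Ideal.apply_eq_zero_of_mem_span _ (by rintro _ (rfl | rfl) <;> simp))

def mod8 : QB →ₐ[ℤ] ZMod 8 :=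
  Ideal.Quotient.liftₐ uIdeal (aeval 2)
    (Ideal.apply_eq_zero_of_mem_span _ (by rintro _ (rfl | rfl) <;> simp [map_ofNat] <;> decide))

@[simp] theorem rank_u : rank u = 0 := aeval_X _

@[simp] theorem mod8_u : mod8 u = 2 := aeval_X _

theorem addOrderOf_u : addOrderOf u = 4 := by
  refine Nat.dvd_antisymm (addOrderOf_dvd_of_nsmul_eq_zero (by simpa using four_mul_u)) ?_
  have h8 : addOrderOf (2 : ZMod 8) = 4 := by
    simpa using ZMod.addOrderOf_coe 2 (n := 8) (by norm_num)
  simpa [h8] using addOrderOf_map_dvd mod8.toRingHom.toAddMonoidHom u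

theorem exists_eq_intCast_add_zsmul_u (w : QB) : ∃ n c : ℤ, w = n + c • u := by
  obtain ⟨p, rfl⟩ := Ideal.Quotient.mk_surjective w
  obtain ⟨c, hc⟩ := exists_aeval_eq_of_sq_eq (a := -2) (by simpa using u_sq) p
  refine ⟨p.eval 0, c, ?_⟩
  rw [zsmul_eq_mul, ← hc, Ideal.Quotient.mk_eq_aeval]; rfl

theorem exists_eq_zsmul_u_of_rank_eq_zero {w : QB} (h : rank w = 0) : ∃ c : ℤ, w = c • u := by
  obtain ⟨n, c, rfl⟩ := exists_eq_intCast_add_zsmul_u w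
  obtain rfl : n = 0 := by simpa using h
  exact ⟨c, by simp⟩

def toQB : QA →ₐ[ℤ] QB :=
  Ideal.Quotient.liftₐ lvIdeal (MvPolynomial.aeval ![u + 1, 2 * u + 2])
    (Ideal.apply_eq_zero_of_mem_span _ (by
      rintro _ (rfl | rfl | rfl) <;> simp only [map_sub, map_mul, map_pow, map_ofNat, map_one,
        MvPolynomial.aeval_X, Matrix.cons_val_zero, Matrix.cons_val_one]
      · linear_combination u_sq
      · ring
      · linear_combination four_mul_u))

def toQA : QB →ₐ[ℤ] QA :=
  Ideal.Quotient.liftₐ uIdeal (aeval (ℓ - 1))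
    (Ideal.apply_eq_zero_of_mem_span _ (by
      rintro _ (rfl | rfl) <;> simp only [map_add, map_mul, map_pow, map_ofNat, aeval_X]
      · linear_combination ℓ_sq
      · linear_combination 2 * two_mul_ℓ + two_mul_v))

@[simp] theorem toQB_ℓ : toQB ℓ = u + 1 := MvPolynomial.aeval_X _ _
@[simp] theorem toQB_v : toQB v = 2 * u + 2 := MvPolynomial.aeval_X _ _
@[simp] theorem toQA_u : toQA u = ℓ - 1 := aeval_X _

def equiv : QA ≃ₐ[ℤ] QB :=
  AlgEquiv.ofAlgHom toQB toQA
    (Ideal.Quotient.algHom_ext _ (Polynomial.algHom_ext (by simp)))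
    (Ideal.Quotient.algHom_ext _ (MvPolynomial.algHom_ext fun i => by
      fin_cases i
      · simp
      · simpa [map_ofNat, mul_sub] using two_mul_ℓ))

end KRP4

end

/-- Let `A = ℤ[ℓ, v]/(ℓ² − 1, 2ℓ − v, 2v − 4)` be the ring presented by the
relations `ℓ² = 1`, `2ℓ = v`, `2v = 4` (modeling `K⁰(ℝP⁴)` via the paper's
presentation with `G₂ = G₄ = ℤ/2` and nonzero cup product). Then
`A ≅ ℤ[u]/(u² + 2u, 4u)` via `ℓ ↦ u + 1`, and the ideal of rank-zero elements
(the kernel of the rank homomorphism `A → ℤ` with `ℓ ↦ 1`, `v ↦ 2`) is cyclic of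
order 4. -/
theorem KRP4_presentation :
    ∀ (A B : Type) (_ : CommRing A) (_ : CommRing B)
      (eA : A ≃+* MvPolynomial (Fin 2) ℤ ⧸
        (Ideal.span {MvPolynomial.X 0 ^ 2 - 1,
          2 * MvPolynomial.X 0 - MvPolynomial.X 1,
          2 * MvPolynomial.X 1 - 4} : Ideal (MvPolynomial (Fin 2) ℤ)))
      (eB : B ≃+* Polynomial ℤ ⧸
        (Ideal.span {Polynomial.X ^ 2 + 2 * Polynomial.X,
          4 * Polynomial.X} : Ideal (Polynomial ℤ)))
      (ℓ v : A) (u : B)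
      (_ : eA ℓ = Ideal.Quotient.mk _ (MvPolynomial.X 0))
      (_ : eA v = Ideal.Quotient.mk _ (MvPolynomial.X 1))
      (_ : eB u = Ideal.Quotient.mk _ Polynomial.X),
    (∃ e : A ≃+* B, e ℓ = u + 1) ∧
    (∃ f : A →+* ℤ, f ℓ = 1 ∧ f v = 2 ∧
      ∃ z : A, f z = 0 ∧ addOrderOf z = 4 ∧
        ∀ w : A, f w = 0 → ∃ n : ℤ, w = n • z) := by
  intro A B _ _ eA eB ℓ v u hℓ hv hu
  let θ : A ≃+* KRP4.QB := eA.trans KRP4.equiv.toRingEquiv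
  have hθℓ : θ ℓ = KRP4.u + 1 := by rw [RingEquiv.trans_apply, hℓ]; exact KRP4.toQB_ℓ
  have hθv : θ v = 2 * KRP4.u + 2 := by rw [RingEquiv.trans_apply, hv]; exact KRP4.toQB_v
  refine ⟨⟨θ.trans eB.symm, ?_⟩,
    ⟨(KRP4.rank : KRP4.QB →+* ℤ).comp θ, ?_, ?_, θ.symm KRP4.u, ?_, ?_, ?_⟩⟩
  · simp [hθℓ, ← hu]
  · simp [hθℓ]
  · simp [hθv, map_ofNat]
  · simp
  · rw [← KRP4.addOrderOf_u]; exact θ.symm.toAddEquiv.addOrderOf_eq _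
  · intro w hw
    obtain ⟨c, hc⟩ := KRP4.exists_eq_zsmul_u_of_rank_eq_zero hw
    exact ⟨c, by rw [← map_zsmul, ← hc]; exact (θ.symm_apply_apply w).symm⟩
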